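/- arXiv:0807.2925 — 4 statements merged into one kernel-verified Lean document; each statement's English description precedes it below -/
import Mathlib

section
/- Let H be a finite-dimensional semisimple Hopf algebra over an algebraically closed field of characteristic zero and K a Hopf subalgebra. If the idempotent integral Λ_K of K is central in H, then HK⁺ = K⁺H, where K⁺ = K ∩ Ker(ε). -/
open scoped TensorProduct


section Defs

variable (k : Type) [CommRing k]

/-- A finite-dimensional representation of a `k`-algebra `A`, given as an algebra
homomorphism into the endomorphism algebra of a finite-dimensional `k`-vector space. -/
structure FinRep (A : Type) [Ring A] [Algebra k A] where
  V : Type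
  [acg : AddCommGroup V]
  [mod : Module k V]
  [fin : Module.Finite k V]
  ρ : A →ₐ[k] Module.End k V

attribute [instance] FinRep.acg FinRep.mod FinRep.fin

variable {A : Type} [Ring A] [Algebra k A]

/-- The character of a finite-dimensional representation. -/
noncomputable def FinRep.chr (r : FinRep k A) : A →ₗ[k] k :=
  (LinearMap.trace k r.V).comp r.ρ.toLinearMap

/-- A representation is irreducible if the underlying space is nontrivial and has no proper
nonzero invariant subspaces. -/
def FinRep.IsIrred (r : FinRep k A) : Prop :=
  Nontrivial r.V ∧ ∀ W : Submodule k r.V, (∀ a : A, ∀ v ∈ W, r.ρ a v ∈ W) → W = ⊥ ∨ W = ⊤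

/-- An irreducible character of `A`. -/
def IsIrrChar (φ : A →ₗ[k] k) : Prop :=
  ∃ r : FinRep k A, r.IsIrred ∧ φ = r.chr

/-- The space of intertwiners between two representations. -/
def homSpace (r s : FinRep k A) : Submodule k (r.V →ₗ[k] s.V) where
  carrier := {T | ∀ a : A, T ∘ₗ r.ρ a = s.ρ a ∘ₗ T}
  add_mem' := by
    intro T T' hT hT' a
    simp only [LinearMap.add_comp, LinearMap.comp_add, hT a, hT' a]
  zero_mem' := by
    intro a
    simp only [LinearMap.zero_comp, LinearMap.comp_zero]
  smul_mem' := by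
    intro c T hT a
    simp only [LinearMap.smul_comp, LinearMap.comp_smul, hT a]

/-- The multiplicity pairing of two finite-dimensional representations: the dimension of the
space of intertwiners.  For a semisimple algebra over an algebraically closed field this is
the usual multiplicity pairing of the corresponding characters. -/
noncomputable def mlt (r s : FinRep k A) : ℕ :=
  Module.finrank k (homSpace k r s)

end Defs

section Hopf

variable (k : Type*) [Field k]
variable (H : Type*) [Ring H] [HopfAlgebra k H]

/-- A Hopf subalgebra: a subalgebra closed under the comultiplication and the antipode. -/
structure IsHopfSubalgebra (K : Subalgebra k H) : Prop where
  comul_mem : ∀ x ∈ K, Coalgebra.comul (R := k) x ∈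
    LinearMap.range (TensorProduct.map K.toSubmodule.subtype K.toSubmodule.subtype)
  antipode_mem : ∀ x ∈ K, HopfAlgebra.antipode (R := k) x ∈ K

/-- `Λ` is a (two-sided) idempotent integral of the subalgebra `K`:
`x Λ = ε(x) Λ = Λ x` for `x ∈ K` and `ε(Λ) = 1`. -/
structure IsIdempotentIntegral (K : Subalgebra k H) (Λ : H) : Prop where
  mem : Λ ∈ K
  counit_eq_one : Coalgebra.counit (R := k) Λ = 1
  mul_left : ∀ x ∈ K, x * Λ = Coalgebra.counit (R := k) x • Λ
  mul_right : ∀ x ∈ K, Λ * x = Coalgebra.counit (R := k) x • Λ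

/-- The linear map `h ↦ h₁ x S(h₂)` (left adjoint action of `h` on `x`). -/
noncomputable def adR (x : H) : H →ₗ[k] H :=
  (LinearMap.mul' k H) ∘ₗ
    (TensorProduct.map (LinearMap.mulRight k x) (HopfAlgebra.antipode (R := k))) ∘ₗ
      Coalgebra.comul

/-- The linear map `h ↦ S(h₁) x h₂`. -/
noncomputable def adL (x : H) : H →ₗ[k] H :=
  (LinearMap.mul' k H) ∘ₗ
    (TensorProduct.map (HopfAlgebra.antipode (R := k)) (LinearMap.mulLeft k x)) ∘ₗ
      Coalgebra.comul

/-- A Hopf subalgebra `K` is normal in `H` if `h₁ x S(h₂) ∈ K` and `S(h₁) x h₂ ∈ K`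
for all `x ∈ K` and `h ∈ H`. -/
def IsNormalHopfSubalgebra (K : Subalgebra k H) : Prop :=
  ∀ x ∈ K, ∀ h : H, adR k H x h ∈ K ∧ adL k H x h ∈ K

end Hopf
section Coind

variable (k : Type) [Field k]
variable (H : Type) [Ring H] [HopfAlgebra k H] [FiniteDimensional k H]
variable (K : Subalgebra k H)

/-- Restriction of a representation of `H` to the subalgebra `K`. -/
def resRep (r : FinRep k H) : FinRep k K where
  V := r.V
  ρ := r.ρ.comp K.val

/-- The underlying space of the (co)induced representation `Hom_K(H, V)`:
`K`-linear maps from `H` (a left `K`-module) to `V`.  Since `H` is a semisimple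
Hopf algebra and `K` a Hopf subalgebra, this realizes the induced module `H ⊗_K V`. -/
def coindSpace (r : FinRep k K) : Submodule k (H →ₗ[k] r.V) where
  carrier := {f | ∀ (x : K) (h : H), f ((x : H) * h) = r.ρ x (f h)}
  add_mem' := by
    intro f g hf hg x h
    simp [hf x h, hg x h]
  zero_mem' := by intro x h; simp
  smul_mem' := by
    intro c f hf x h
    simp [hf x h]

/-- The (co)induced representation of `H` on `Hom_K(H, V)`, where `H` acts by
right translation: `(h' • f) h = f (h h')`. -/
noncomputable def coind (r : FinRep k K) : FinRep k H where
  V := coindSpace k H K r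
  ρ :=
    { toFun := fun h' =>
        { toFun := fun f => ⟨(f : H →ₗ[k] r.V) ∘ₗ LinearMap.mulRight k h', by
            intro x h
            simpa [mul_assoc] using f.2 x (h * h')⟩
          map_add' := by intro f g; ext h; simp
          map_smul' := by intro c f; ext h; simp }
      map_one' := by ext f h; simp
      map_mul' := by intro h₁ h₂; ext f h; simp [mul_assoc]
      map_zero' := by ext f h; simp
      map_add' := by intro h₁ h₂; ext f h; simp [mul_add]
      commutes' := by
        intro c
        ext f h
        simp [Algebra.algebraMap_eq_smul_one, Algebra.mul_smul_comm, Algebra.smul_mul_assoc] }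

/-- The trivial representation of the Hopf subalgebra `K`, given by the counit. -/
noncomputable def trivRep : FinRep k K where
  V := k
  ρ := (Algebra.lmul k k).comp ((Bialgebra.counitAlgHom k H).comp K.val)

/-- The (left) regular representation of a finite-dimensional algebra. -/
def regRep (A : Type) [Ring A] [Algebra k A] [Module.Finite k A] : FinRep k A where
  V := A
  ρ := Algebra.lmul k A

/-- The convolution product of two linear functionals on a coalgebra. -/
noncomputable def conv {C : Type} [AddCommGroup C] [Module k C] [Coalgebra k C]
    (f g : C →ₗ[k] k) : C →ₗ[k] k :=
  (LinearMap.mul' k k) ∘ₗ (TensorProduct.map f g) ∘ₗ Coalgebra.comul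

end Coind

theorem integral_central_implies_HKplus_eq_KplusH (k H : Type) [Field k] [IsAlgClosed k] [CharZero k]
    [Ring H] [HopfAlgebra k H] [FiniteDimensional k H] [IsSemisimpleRing H]
    (K : Subalgebra k H) (hK : IsHopfSubalgebra k H K)
    (Λ : H) (hΛ : IsIdempotentIntegral k H K Λ)
    (hcentral : ∀ h : H, Λ * h = h * Λ) :
    Submodule.span k {z : H | ∃ h : H, ∃ x ∈ K.toSubmodule ⊓ LinearMap.ker (Coalgebra.counit (R := k)), z = h * x} =
      Submodule.span k {z : H | ∃ h : H, ∃ x ∈ K.toSubmodule ⊓ LinearMap.ker (Coalgebra.counit (R := k)), z = x * h} := by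
  have h1Λ : (1 - Λ) ∈ K.toSubmodule ⊓ LinearMap.ker (Coalgebra.counit (R := k)) := by
    refine ⟨K.toSubmodule.sub_mem K.one_mem hΛ.mem, ?_⟩
    simp [LinearMap.mem_ker, map_sub, hΛ.counit_eq_one]
  apply le_antisymm <;> rw [Submodule.span_le] <;>
    rintro z ⟨h, x, ⟨hxK, hxε⟩, rfl⟩ <;> apply Submodule.subset_span
  · refine ⟨h * x, 1 - Λ, h1Λ, ?_⟩
    have hΛx : Λ * x = 0 := by
      rw [hΛ.mul_right x hxK, LinearMap.mem_ker.mp hxε, zero_smul]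
    rw [sub_mul, one_mul, ← mul_assoc, hcentral h, mul_assoc, hΛx, mul_zero, sub_zero]
  · refine ⟨x * h, 1 - Λ, h1Λ, ?_⟩
    have hxΛ : x * Λ = 0 := by
      rw [hΛ.mul_left x hxK, LinearMap.mem_ker.mp hxε, zero_smul]
    rw [mul_sub, mul_one, mul_assoc, ← hcentral h, ← mul_assoc, hxΛ, zero_mul, sub_zero]
end

section
/- Let H be a finite-dimensional semisimple Hopf algebra over an algebraically closed field of characteristic zero and K a Hopf subalgebra. The depth two condition (∃ N > 0 with m_H(α↑↓↑, χ) ≤ N·m_H(α↑, χ) for all α ∈ Irr(K), χ ∈ Irr(H)) holds if and only if for every α ∈ Irr(K), the induced characters α↑_K^H↓_K^H↑_K^H and α↑_K^H have exactly the same set of irreducible H-constituents. -/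
open scoped TensorProduct


section Aux

variable {k : Type} [Field k]

/-- Multiplicity is bounded by the product of dimensions. -/
lemma mlt_le_dim {A : Type} [Ring A] [Algebra k A] (r s : FinRep k A) :
    mlt k r s ≤ Module.finrank k r.V * Module.finrank k s.V := by
  have := Submodule.finrank_le (homSpace k r s)
  rwa [Module.finrank_linearMap] at this

/-- An irreducible representation has dimension at most the dimension of the algebra. -/
lemma dim_irred_le {A : Type} [Ring A] [Algebra k A] [Module.Finite k A]
    (r : FinRep k A) (hr : r.IsIrred k) : Module.finrank k r.V ≤ Module.finrank k A := by
  obtain ⟨hnt, hsub⟩ := hr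
  obtain ⟨v, hv⟩ := exists_ne (0 : r.V)
  let L : A →ₗ[k] r.V :=
    { toFun := fun a => r.ρ a v
      map_add' := by intro a b; simp [map_add]
      map_smul' := by intro c a; simp [map_smul] }
  have hW : LinearMap.range L = ⊤ := by
    rcases hsub (LinearMap.range L) (by
      rintro a w ⟨b, rfl⟩
      exact ⟨a * b, by simp [L, map_mul, Module.End.mul_apply]⟩) with h | h
    · exfalso
      apply hv
      have : L 1 ∈ LinearMap.range L := ⟨1, rfl⟩
      rw [h] at this
      simpa [L] using this
    · exact h
  calc Module.finrank k r.V = Module.finrank k (⊤ : Submodule k r.V) :=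
        (finrank_top k r.V).symm
    _ = Module.finrank k (LinearMap.range L) := by rw [hW]
    _ ≤ Module.finrank k A := LinearMap.finrank_range_le L

variable (H : Type) [Ring H] [HopfAlgebra k H] [FiniteDimensional k H]
variable (K : Subalgebra k H)

lemma dim_coind_le (r : FinRep k ↥K) :
    Module.finrank k (coind k H K r).V ≤ Module.finrank k H * Module.finrank k r.V := by
  have := Submodule.finrank_le (coindSpace k H K r)
  rwa [Module.finrank_linearMap] at this

/-- The natural retraction `coind (res (coind r)) → coind r`, `F ↦ (h ↦ (F h) 1)`. -/
noncomputable def coindRetr (r : FinRep k ↥K) :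
    (coind k H K (resRep k H K (coind k H K r))).V →ₗ[k] (coind k H K r).V where
  toFun F := ⟨(LinearMap.applyₗ (1 : H) ∘ₗ (coindSpace k H K r).subtype) ∘ₗ F.1, by
    intro x h
    have h1 : F.1 ((x : H) * h) = (coind k H K r).ρ (x : H) (F.1 h) := F.2 x h
    have h2 : (F.1 h).1 ((x : H) * 1) = r.ρ x ((F.1 h).1 1) := (F.1 h).2 x 1
    show (F.1 ((x : H) * h)).1 1 = r.ρ x ((F.1 h).1 1)
    rw [h1]
    show (F.1 h).1 (1 * (x : H)) = r.ρ x ((F.1 h).1 1)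
    rw [one_mul, ← h2, mul_one]⟩
  map_add' F G := by
    apply Subtype.ext
    apply LinearMap.ext
    intro h
    exact map_add (LinearMap.applyₗ (1 : H) ∘ₗ (coindSpace k H K r).subtype) (F.1 h) (G.1 h)
  map_smul' c F := by
    apply Subtype.ext
    apply LinearMap.ext
    intro h
    exact map_smul (LinearMap.applyₗ (1 : H) ∘ₗ (coindSpace k H K r).subtype) c (F.1 h)

lemma coindRetr_intertwine (r : FinRep k ↥K) (a : H) :
    coindRetr H K r ∘ₗ (coind k H K (resRep k H K (coind k H K r))).ρ a =
      (coind k H K r).ρ a ∘ₗ coindRetr H K r := by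
  ext F
  apply Subtype.ext
  ext h
  rfl

/-- The "unit" element: `t f = (h ↦ h • f)` as an element of `coind (res (coind r))`. -/
noncomputable def coindUnit (r : FinRep k ↥K) (f : (coind k H K r).V) :
    (coind k H K (resRep k H K (coind k H K r))).V :=
  ⟨LinearMap.applyₗ f ∘ₗ (coind k H K r).ρ.toLinearMap, by
    intro x h
    show (coind k H K r).ρ ((x : H) * h) f =
      (resRep k H K (coind k H K r)).ρ x ((coind k H K r).ρ h f)
    rw [map_mul, Module.End.mul_apply]
    rfl⟩

lemma coindRetr_unit (r : FinRep k ↥K) (f : (coind k H K r).V) :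
    coindRetr H K r (coindUnit H K r f) = f := by
  apply Subtype.ext
  apply LinearMap.ext
  intro h
  show ((coind k H K r).ρ h f).1 1 = f.1 h
  show f.1 (1 * h) = f.1 h
  rw [one_mul]

/-- If `coind r` has `s` as a constituent, so does `coind (res (coind r))`. -/
lemma mlt_coind_ne_zero (r : FinRep k ↥K) (s : FinRep k H)
    (hne : mlt k (coind k H K r) s ≠ 0) :
    mlt k (coind k H K (resRep k H K (coind k H K r))) s ≠ 0 := by
  have hfin : FiniteDimensional k ((coind k H K r).V →ₗ[k] s.V) := inferInstance
  have hnt : Nontrivial (homSpace k (coind k H K r) s) :=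
    Module.finrank_pos_iff.mp (Nat.pos_of_ne_zero hne)
  obtain ⟨φ, hφ⟩ := exists_ne (0 : homSpace k (coind k H K r) s)
  have hφv : (φ : (coind k H K r).V →ₗ[k] s.V) ≠ 0 := by
    simpa [Submodule.coe_eq_zero] using hφ
  obtain ⟨f, hf⟩ : ∃ f, (φ : (coind k H K r).V →ₗ[k] s.V) f ≠ 0 := by
    by_contra hc
    push_neg at hc
    exact hφv (LinearMap.ext fun f => by simpa using hc f)
  set ψ : (coind k H K (resRep k H K (coind k H K r))).V →ₗ[k] s.V :=
    (φ : (coind k H K r).V →ₗ[k] s.V) ∘ₗ coindRetr H K r with hψ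
  have hmem : ψ ∈ homSpace k (coind k H K (resRep k H K (coind k H K r))) s := by
    intro a
    rw [hψ, LinearMap.comp_assoc, coindRetr_intertwine, ← LinearMap.comp_assoc,
      φ.2 a, LinearMap.comp_assoc]
  have hψne : ψ ≠ 0 := by
    intro hz
    apply hf
    have := congrArg (fun (T : _ →ₗ[k] s.V) => T (coindUnit H K r f)) hz
    simpa [hψ, coindRetr_unit] using this
  intro hz
  have : Nontrivial (homSpace k (coind k H K (resRep k H K (coind k H K r))) s) :=
    ⟨⟨ψ, hmem⟩, 0, by simp [Subtype.ext_iff, hψne]⟩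
  exact (Module.finrank_pos_iff.mpr this).ne' hz

end Aux

theorem depth_two_iff_same_constituents (k H : Type) [Field k] [IsAlgClosed k] [CharZero k]
    [Ring H] [HopfAlgebra k H] [FiniteDimensional k H] [IsSemisimpleRing H]
    (K : Subalgebra k H) (hK : IsHopfSubalgebra k H K) :
    (∃ N : ℕ, 0 < N ∧ ∀ rα : FinRep k ↥K, FinRep.IsIrred k rα →
      ∀ s : FinRep k H, FinRep.IsIrred k s →
        mlt k (coind k H K (resRep k H K (coind k H K rα))) s ≤ N * mlt k (coind k H K rα) s) ↔
      ∀ rα : FinRep k ↥K, FinRep.IsIrred k rα →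
        ∀ s : FinRep k H, FinRep.IsIrred k s →
          (mlt k (coind k H K (resRep k H K (coind k H K rα))) s ≠ 0 ↔
            mlt k (coind k H K rα) s ≠ 0) := by
  constructor
  · rintro ⟨N, hN, hb⟩ rα hα s hs
    constructor
    · intro h1 h2
      have hle := hb rα hα s hs
      rw [h2, Nat.mul_zero] at hle
      exact h1 (Nat.le_zero.mp hle)
    · exact mlt_coind_ne_zero H K rα s
  · intro h
    refine ⟨(Module.finrank k H) ^ 4 + 1, Nat.succ_pos _, ?_⟩
    intro rα hα s hs
    by_cases hz : mlt k (coind k H K rα) s = 0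
    · have hA : mlt k (coind k H K (resRep k H K (coind k H K rα))) s = 0 := by
        by_contra hA
        exact ((h rα hα s hs).mp hA) hz
      simp [hA]
    · set D := Module.finrank k H with hD
      have h1 : Module.finrank k rα.V ≤ D :=
        le_trans (dim_irred_le rα hα) (Submodule.finrank_le K.toSubmodule)
      have h2 : Module.finrank k (coind k H K rα).V ≤ D * D :=
        le_trans (dim_coind_le H K rα) (Nat.mul_le_mul_left D h1)
      have h4 : Module.finrank k (coind k H K (resRep k H K (coind k H K rα))).V
          ≤ D * (D * D) := by
        refine le_trans (dim_coind_le H K _) (Nat.mul_le_mul_left D ?_)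
        exact h2
      have h5 : Module.finrank k s.V ≤ D := dim_irred_le s hs
      calc mlt k (coind k H K (resRep k H K (coind k H K rα))) s
          ≤ D * (D * D) * D := le_trans (mlt_le_dim _ _) (Nat.mul_le_mul h4 h5)
        _ ≤ D ^ 4 + 1 := by
            have : D * (D * D) * D = D ^ 4 := by ring
            omega
        _ ≤ (D ^ 4 + 1) * mlt k (coind k H K rα) s :=
            Nat.le_mul_of_pos_right _ (Nat.pos_of_ne_zero hz)
end

section
/- Let G be a finite group, N ≤ G a subgroup, and k an algebraically closed field of characteristic zero. Then N is normal in G if and only if the induction to G of the trivial character of N, restricted back to N, equals [G:N] times the trivial character of N. -/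
open scoped Classical

section GroupDefs

variable (k : Type) [Field k]

/-- A finite-dimensional representation of a group `G` over `k`. -/
structure GFinRep (G : Type) [Group G] where
  V : Type
  [acg : AddCommGroup V]
  [mod : Module k V]
  [fin : Module.Finite k V]
  ρ : G →* (V →ₗ[k] V)

attribute [instance] GFinRep.acg GFinRep.mod GFinRep.fin

variable {G : Type} [Group G]

/-- The character of a finite-dimensional representation of a group. -/
noncomputable def GFinRep.chr (r : GFinRep k G) : G → k :=
  fun g => LinearMap.trace k r.V (r.ρ g)

/-- Irreducibility: the space is nontrivial and has no proper nonzero invariant subspaces. -/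
def GFinRep.IsIrred (r : GFinRep k G) : Prop :=
  Nontrivial r.V ∧ ∀ W : Submodule k r.V, (∀ g : G, ∀ v ∈ W, r.ρ g v ∈ W) → W = ⊥ ∨ W = ⊤

/-- An irreducible character of the group `G` over `k`. -/
def IsIrrCharG (φ : G → k) : Prop :=
  ∃ r : GFinRep k G, GFinRep.IsIrred k r ∧ φ = GFinRep.chr k r

variable (G)

/-- The induced class function: `(Ind f)(g) = |N|⁻¹ ∑_{x ∈ G, x⁻¹gx ∈ N} f(x⁻¹gx)`. -/
noncomputable def indCF [Fintype G] (N : Subgroup G) (f : ↥N → k) : G → k :=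
  fun g => (Nat.card ↥N : k)⁻¹ * ∑ x : G, if h : x⁻¹ * g * x ∈ N then f ⟨x⁻¹ * g * x, h⟩ else 0

/-- Restriction of a class function on `G` to the subgroup `N`. -/
def resCF (N : Subgroup G) (F : G → k) : ↥N → k :=
  fun n => F (n : G)

/-- The inner product (multiplicity pairing) of class functions on a finite group,
over a field of characteristic zero. -/
noncomputable def innerCF [Fintype G] (φ ψ : G → k) : k :=
  (Nat.card G : k)⁻¹ * ∑ g : G, φ g * ψ g⁻¹

end GroupDefs

open Finset

theorem Subgroup.normal_iff_forall_inv_mul_mul_mem {G : Type*} [Group G] (N : Subgroup G) :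
    N.Normal ↔ ∀ n ∈ N, ∀ g : G, g⁻¹ * n * g ∈ N :=
  ⟨fun hN n hn g => hN.conj_mem' n hn g, fun h => ⟨fun n hn g => by simpa using h n hn g⁻¹⟩⟩

section Induction

variable (k : Type) [Field k] (G : Type) [Group G] [Fintype G] (N : Subgroup G)

theorem indCF_const_apply (c : k) (g : G) :
    indCF k G N (fun _ => c) g = (Nat.card N : k)⁻¹ * #{x | x⁻¹ * g * x ∈ N} * c := by
  simp only [indCF, dite_eq_ite, ← sum_filter, sum_const, nsmul_eq_mul, mul_assoc]

/-- Since `|N| · [G:N] = |G|`, the value `[G:N]` forces `#{x | x⁻¹gx ∈ N} = |G|`. -/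
theorem indCF_one_apply_eq_index_iff [CharZero k] (g : G) :
    indCF k G N (fun _ => 1) g = N.index ↔ ∀ x : G, x⁻¹ * g * x ∈ N := by
  have hN : (Nat.card N : k) ≠ 0 := Nat.cast_ne_zero.mpr Nat.card_pos.ne'
  rw [indCF_const_apply, mul_one, inv_mul_eq_iff_eq_mul₀ hN, ← Nat.cast_mul,
    Subgroup.card_mul_index, Nat.cast_inj, Nat.card_eq_fintype_card, ← card_univ,
    card_filter_eq_iff]
  simp only [mem_univ, true_imp_iff]

end Induction

theorem normal_iff_res_ind_trivial_group_general (k : Type) [Field k] [CharZero k]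
    (G : Type) [Group G] [Fintype G] (N : Subgroup G) :
    N.Normal ↔
      (fun n : ↥N => indCF k G N (fun _ : ↥N => (1 : k)) (n : G)) =
        (fun _ : ↥N => (N.index : k)) := by
  simp only [funext_iff, indCF_one_apply_eq_index_iff, Subtype.forall,
    N.normal_iff_forall_inv_mul_mul_mem]

theorem normal_iff_res_ind_trivial_group (k : Type) [Field k] [IsAlgClosed k] [CharZero k]
    (G : Type) [Group G] [Fintype G] (N : Subgroup G) :
    N.Normal ↔
      (fun n : ↥N => indCF k G N (fun _ : ↥N => (1 : k)) (n : G)) =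
        (fun _ : ↥N => (N.index : k)) :=
  normal_iff_res_ind_trivial_group_general k G N
end

section
/- Let G be a finite group, N ≤ G a subgroup, and k an algebraically closed field of characteristic zero. Suppose there exists N₀ > 0 such that ⟨Ind Res Ind α, χ⟩_G ≤ N₀·⟨Ind α, χ⟩_G for all irreducible characters α of N and χ of G. Then N is normal in G. -/
open scoped Classical

/-!
If `N` is not normal, pick `g` such that `K := N ∩ g⁻¹ N g` is a proper subgroup of `N`. In the
permutation module `k[N ⧸ K]` the trivial coset is fixed by `K` but not by `N`, so by Maschke's
theorem some irreducible subrepresentation `U` has nonzero `K`-fixed vectors and no `N`-fixed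
vectors. Let `α` be its character and `χ = 1`. Frobenius reciprocity gives
`⟨Ind α, 1⟩ = dim U^N = 0`, while Mackey's formula, obtained by summing over the orbits of
`N × N` acting on `G` by `(a, b) • x = a * x * b⁻¹`, gives
`⟨Ind Res Ind α, 1⟩ = ∑_{N x N} dim U^(N ∩ x⁻¹ N x) ≥ dim U^K > 0`.
-/

open Module Representation MulAction

theorem Fintype.sum_dite_eq_sum_subtype {ι M : Type*} [Fintype ι] [AddCommMonoid M]
    (p : ι → Prop) [DecidablePred p] (f : Subtype p → M) :
    ∑ x, (if h : p x then f ⟨x, h⟩ else 0) = ∑ x : Subtype p, f x := by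
  rw [Finset.sum_dite, Finset.sum_const_zero, add_zero]
  exact Fintype.sum_equiv (Equiv.subtypeEquivRight (by simp)) _ _ fun _ => rfl

theorem MulAction.sum_card_stabilizer_smul_eq {Γ X M : Type*} [Group Γ] [MulAction Γ X]
    [Fintype X] [Fintype (orbitRel.Quotient Γ X)] [AddCommMonoid M] (f : X → M)
    (hf : ∀ (g : Γ) x, f (g • x) = f x) :
    ∑ x, Nat.card (stabilizer Γ x) • f x
      = Nat.card Γ • ∑ ω : orbitRel.Quotient Γ X, f ω.out := by
  classical
  have horbit : ∀ z : X, ∀ y ∈ orbit Γ z,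
      Nat.card (stabilizer Γ y) • f y = Nat.card (stabilizer Γ z) • f z := by
    rintro z _ ⟨g, rfl⟩
    rw [hf, Nat.card_congr (stabilizerEquivStabilizer (rfl : g • z = g • z)).toEquiv.symm]
  rw [← Fintype.sum_equiv (selfEquivSigmaOrbits Γ X).symm _ _ fun _ => rfl,
    Fintype.sum_sigma, Finset.smul_sum]
  refine Finset.sum_congr rfl fun ω _ => ?_
  change ∑ y : orbit Γ ω.out, Nat.card (stabilizer Γ (y : X)) • f y = _
  rw [Finset.sum_congr rfl fun (y : orbit Γ ω.out) _ => horbit ω.out y y.2, Finset.sum_const,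
    Finset.card_univ, smul_smul, ← (stabilizer Γ ω.out).index_mul_card, index_stabilizer Γ,
    ← Nat.card_coe_set_eq, Fintype.card_eq_nat_card]

theorem LinearMap.apply_eq_self_of_apply_add_eq_self {k V : Type*} [Ring k] [AddCommGroup V]
    [Module k V] {T : V →ₗ[k] V} {P C : Submodule k V} (hPC : Disjoint P C)
    (hP : P ≤ P.comap T) (hC : C ≤ C.comap T) {p c : V} (hp : p ∈ P) (hc : c ∈ C)
    (hpc : T (p + c) = p + c) : T p = p ∧ T c = c := by
  have hdiff : T p - p = c - T c := by
    rw [map_add] at hpc; linear_combination (norm := abel) hpc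
  have hzero : T p - p = 0 :=
    Submodule.disjoint_def.1 hPC _ (P.sub_mem (hP hp) hp) (hdiff ▸ C.sub_mem hc (hC hc))
  exact ⟨sub_eq_zero.1 hzero, (sub_eq_zero.1 (hdiff ▸ hzero)).symm⟩

namespace Representation

variable {k H V : Type*} [Field k] [Group H] [AddCommGroup V] [Module k V]

theorem sum_trace_eq_card_mul_finrank_invariants [Fintype H] [NeZero (Nat.card H : k)]
    [FiniteDimensional k V] (ρ : Representation k H V) :
    ∑ h, LinearMap.trace k V (ρ h) = Nat.card H * finrank k (invariants ρ) := by
  have hcard : (Fintype.card H : k) ≠ 0 := Fintype.card_eq_nat_card (α := H) ▸ NeZero.ne _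
  let : Invertible (Fintype.card H : k) := invertibleOfNonzero hcard
  have h := (isProj_averageMap ρ).trace
  simp only [averageMap, GroupAlgebra.average, invOf_eq_inv, MonoidAlgebra.of_apply, map_smul,
    map_sum, asAlgebraHom_single, one_smul, smul_eq_mul] at h
  rw [← h, Nat.card_eq_fintype_card, mul_inv_cancel_left₀ hcard]

theorem invariants_comp_map_conj (ρ : Representation k H V) (S : Subgroup H) (g : H) :
    invariants (ρ.comp (S.map (MulAut.conj g).toMonoidHom).subtype)
      = (invariants (ρ.comp S.subtype)).map (ρ g) := by
  ext v
  simp only [mem_invariants, Submodule.mem_map, MonoidHom.coe_comp, Function.comp_apply,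
    Subgroup.coe_subtype, Subtype.forall, Subgroup.mem_map, MulEquiv.coe_toMonoidHom,
    MulAut.conj_apply]
  constructor
  · intro hv
    refine ⟨ρ g⁻¹ v, fun s hs => ?_, self_inv_apply ρ g v⟩
    calc ρ s (ρ g⁻¹ v) = ρ g⁻¹ (ρ (g * s * g⁻¹) v) := by
          simp [← Module.End.mul_apply, ← map_mul, mul_assoc]
      _ = ρ g⁻¹ v := by rw [hv _ ⟨s, hs, rfl⟩]
  · rintro ⟨w, hw, rfl⟩ _ ⟨s, hs, rfl⟩
    calc ρ (g * s * g⁻¹) (ρ g w) = ρ g (ρ s w) := by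
          simp [← Module.End.mul_apply, ← map_mul, mul_assoc]
      _ = ρ g w := by rw [hw s hs]

theorem finrank_invariants_comp_stabilizer_smul {X : Type*} [MulAction H X]
    (ρ : Representation k H V) (g : H) (x : X) :
    finrank k (invariants (ρ.comp (stabilizer H (g • x)).subtype))
      = finrank k (invariants (ρ.comp (stabilizer H x).subtype)) := by
  rw [stabilizer_smul_eq_stabilizer_map_conj, invariants_comp_map_conj]
  exact (Submodule.equivMapOfInjective _ (apply_bijective ρ g).1 _).finrank_eq.symm

theorem ofMulAction_single_one_eq_self_iff {X : Type*} [MulAction H X]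
    (g : H) (x : X) :
    ofMulAction k H X g (MonoidAlgebra.single x 1) = MonoidAlgebra.single x 1
      ↔ g ∈ stabilizer H x := by
  rw [ofMulAction_single, MonoidAlgebra.single_left_inj one_ne_zero, mem_stabilizer_iff]

end Representation

namespace Subrepresentation

variable {k H V : Type*} [Field k] [Group H] [AddCommGroup V] [Module k V]
  {ρ : Representation k H V}

theorem disjoint_toSubmodule {P Q : Subrepresentation ρ} (h : Disjoint P Q) :
    Disjoint P.toSubmodule Q.toSubmodule := by
  rw [disjoint_iff] at h ⊢
  exact congrArg toSubmodule h

theorem exists_add_eq_of_isCompl {P Q : Subrepresentation ρ} (h : IsCompl P Q) (v : V) :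
    ∃ p ∈ P.toSubmodule, ∃ q ∈ Q.toSubmodule, p + q = v := by
  have : v ∈ (P ⊔ Q).toSubmodule := by rw [h.sup_eq_top]; trivial
  exact Submodule.mem_sup.1 this

theorem apply_eq_self_of_isCompl {P Q : Subrepresentation ρ} (hPQ : IsCompl P Q) {p q : V}
    (hp : p ∈ P.toSubmodule) (hq : q ∈ Q.toSubmodule) {h : H} (hpq : ρ h (p + q) = p + q) :
    ρ h p = p ∧ ρ h q = q :=
  LinearMap.apply_eq_self_of_apply_add_eq_self (disjoint_toSubmodule hPQ.disjoint)
    (fun _ hv => P.apply_mem_toSubmodule h hv) (fun _ hv => Q.apply_mem_toSubmodule h hv) hp hq hpq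

theorem invariants_toRepresentation_eq_bot {U : Subrepresentation ρ}
    (hU : Disjoint U.toSubmodule (invariants ρ)) : invariants U.toRepresentation = ⊥ := by
  refine (Submodule.eq_bot_iff _).2 fun u hu => Subtype.ext ?_
  exact Submodule.disjoint_def.1 hU _ u.2 fun g => congrArg Subtype.val (hu g)

theorem invariants_toRepresentation_comp_ne_bot {U : Subrepresentation ρ} {K : Subgroup H}
    (hU : U.toSubmodule ⊓ invariants (ρ.comp K.subtype) ≠ ⊥) :
    invariants (U.toRepresentation.comp K.subtype) ≠ ⊥ := by
  obtain ⟨u, ⟨huU, huK⟩, hu⟩ := Submodule.exists_mem_ne_zero_of_ne_bot hU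
  exact (Submodule.ne_bot_iff _).2
    ⟨⟨u, huU⟩, fun h => Subtype.ext (huK h), fun h => hu (congrArg Subtype.val h)⟩

variable [Finite H] [NeZero (Nat.card H : k)]

theorem isAtom_of_minimal (K : Subgroup H) {U : Subrepresentation ρ}
    (hU : Minimal (fun P : Subrepresentation ρ =>
      P.toSubmodule ⊓ invariants (ρ.comp K.subtype) ≠ ⊥) U) : IsAtom U := by
  refine ⟨fun hbot => hU.prop (by rw [hbot]; exact bot_inf_eq _), fun P hPU => ?_⟩
  obtain ⟨u, ⟨huU, huK⟩, hu⟩ := Submodule.exists_mem_ne_zero_of_ne_bot hU.prop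
  obtain ⟨P', hP'⟩ := exists_isCompl P
  obtain ⟨p, hp, p', hp', rfl⟩ := exists_add_eq_of_isCompl hP' u
  have hfix (h : K) := apply_eq_self_of_isCompl hP' hp hp' (huK h)
  -- The components of a `K`-fixed vector along `P ⊕ P'` are `K`-fixed, so minimality of `U`
  -- leaves only `P = ⊥` or `P = U`.
  by_cases hp0 : p = 0
  · subst hp0
    rw [zero_add] at hu huU
    have hUP' : U ≤ P' ⊓ U :=
      hU.le_of_le
        (Submodule.ne_bot_iff _ |>.2 ⟨p', ⟨⟨hp', huU⟩, fun h => (hfix h).2⟩, hu⟩) inf_le_right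
    exact hP'.disjoint.eq_bot_of_le (hPU.le.trans (hUP'.trans inf_le_left))
  · have hP : P.toSubmodule ⊓ invariants (ρ.comp K.subtype) ≠ ⊥ :=
      Submodule.ne_bot_iff _ |>.2 ⟨p, ⟨hp, fun h => (hfix h).1⟩, hp0⟩
    exact absurd (hU.le_of_le hP hPU.le) hPU.not_ge

theorem exists_isAtom_of_mem_invariants_of_notMem [FiniteDimensional k V] (K : Subgroup H)
    {v : V} (hvK : v ∈ invariants (ρ.comp K.subtype)) (hv : v ∉ invariants ρ) :
    ∃ U : Subrepresentation ρ, IsAtom U ∧ invariants U.toRepresentation = ⊥ ∧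
      invariants (U.toRepresentation.comp K.subtype) ≠ ⊥ := by
  let I : Subrepresentation ρ := ⟨invariants ρ, fun g v hv h => by rw [hv g, hv h]⟩
  obtain ⟨C, hC⟩ := exists_isCompl I
  obtain ⟨a, ha, c, hc, rfl⟩ := exists_add_eq_of_isCompl hC v
  have hc0 : c ≠ 0 := by rintro rfl; exact hv (by rwa [add_zero])
  have hCK : C.toSubmodule ⊓ invariants (ρ.comp K.subtype) ≠ ⊥ :=
    Submodule.ne_bot_iff _ |>.2
      ⟨c, ⟨hc, fun h => (apply_eq_self_of_isCompl hC ha hc (hvK h)).2⟩, hc0⟩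
  have : WellFoundedLT (Subrepresentation ρ) :=
    StrictMono.wellFoundedLT (f := toSubmodule) fun _ _ h => h
  obtain ⟨U, hUC, hU⟩ := exists_minimal_le_of_wellFoundedLT
    (fun P : Subrepresentation ρ => P.toSubmodule ⊓ invariants (ρ.comp K.subtype) ≠ ⊥) C hCK
  exact ⟨U, isAtom_of_minimal K hU,
    invariants_toRepresentation_eq_bot ((disjoint_toSubmodule hC.disjoint.symm).mono_left hUC),
    invariants_toRepresentation_comp_ne_bot hU.prop⟩

end Subrepresentation

section GFinRep

variable {k H V : Type} [Field k] [Group H] [AddCommGroup V] [Module k V] [FiniteDimensional k V]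
  {ρ : Representation k H V}

abbrev Subrepresentation.toGFinRep (U : Subrepresentation ρ) : GFinRep k H :=
  ⟨U.toSubmodule, U.toRepresentation⟩

theorem Subrepresentation.isIrred_toGFinRep {U : Subrepresentation ρ} (hU : IsAtom U) :
    U.toGFinRep.IsIrred k := by
  refine ⟨Submodule.nontrivial_iff_ne_bot.2 fun h => hU.1 (toSubmodule_injective h),
    fun W hW => ?_⟩
  let P : Subrepresentation ρ :=
    ⟨W.map U.toSubmodule.subtype, by rintro g _ ⟨w, hw, rfl⟩; exact ⟨_, hW g w hw, rfl⟩⟩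
  have hinj := Submodule.map_injective_of_injective U.toSubmodule.injective_subtype
  rcases (Submodule.map_subtype_le U.toSubmodule W : P ≤ U).lt_or_eq with hlt | heq
  · exact .inl (hinj (by rw [Submodule.map_bot]; exact congrArg toSubmodule (hU.2 P hlt)))
  · exact .inr (hinj (by rw [Submodule.map_subtype_top]; exact heq))

end GFinRep

theorem isIrrCharG_one (k G : Type) [Field k] [Group G] : IsIrrCharG k (fun _ : G => (1 : k)) :=
  ⟨⟨k, 1⟩, ⟨inferInstance, fun W _ => eq_bot_or_eq_top W⟩,
    by funext; simp [GFinRep.chr]⟩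

namespace Subgroup

variable {G : Type*} [Group G] (N : Subgroup G)

abbrev doubleCosetAction : MulAction (N × N) G where
  smul p x := p.1 * x * (p.2 : G)⁻¹
  one_smul x := by simp [HSMul.hSMul]
  mul_smul p q x := by simp [HSMul.hSMul, mul_assoc]

attribute [local instance] doubleCosetAction

theorem mem_stabilizer_doubleCosetAction_iff {x : G} {p : N × N} :
    p ∈ stabilizer (N × N) x ↔ x⁻¹ * p.1 * x = p.2 := by
  rw [mem_stabilizer_iff]
  change (p.1 : G) * x * (p.2 : G)⁻¹ = x ↔ _
  rw [mul_inv_eq_iff_eq_mul, mul_assoc, inv_mul_eq_iff_eq_mul, eq_comm]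

theorem mem_map_snd_stabilizer_iff {x : G} {m : N} :
    m ∈ (stabilizer (N × N) x).map (MonoidHom.snd N N) ↔ x * m * x⁻¹ ∈ N := by
  constructor
  · rintro ⟨p, hp, rfl⟩
    rw [MonoidHom.coe_snd, ← N.mem_stabilizer_doubleCosetAction_iff.1 hp]
    simp [mul_assoc]
  · intro h
    exact ⟨(⟨_, h⟩, m), N.mem_stabilizer_doubleCosetAction_iff.2 (by simp [mul_assoc]), rfl⟩

end Subgroup

section Induction

variable {k G : Type} [Field k] [Group G] [Fintype G] (N : Subgroup G)

theorem sum_dite_conj_mem {M : Type*} [AddCommMonoid M] (x : G) (f : N → M) :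
    ∑ g : G, (if h : x⁻¹ * g * x ∈ N then f ⟨_, h⟩ else 0) = ∑ n : N, f n := by
  rw [← Fintype.sum_dite_eq_sum_subtype (· ∈ N) f]
  exact Fintype.sum_equiv (MulAut.conj x⁻¹).toEquiv _ _ fun g => by simp

theorem innerCF_indCF_one [NeZero (Nat.card G : k)] (f : N → k) :
    innerCF k G (indCF k G N f) (fun _ => 1) = (Nat.card N : k)⁻¹ * ∑ n, f n := by
  simp only [innerCF, indCF, mul_one, ← Finset.mul_sum]
  rw [Finset.sum_comm]
  simp only [sum_dite_conj_mem, Finset.sum_const, Finset.card_univ, nsmul_eq_mul,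
    Fintype.card_eq_nat_card]
  rw [mul_left_comm, inv_mul_cancel_left₀ (NeZero.ne _)]

attribute [local instance] Subgroup.doubleCosetAction

theorem sum_dite_conj_mem_eq_sum_stabilizer {M : Type*} [AddCommMonoid M] (x : G) (f : N → M) :
    ∑ n : N, (if h : x⁻¹ * n * x ∈ N then f ⟨_, h⟩ else 0)
      = ∑ p : stabilizer (N × N) x, f p.1.2 := by
  refine (Fintype.sum_dite_eq_sum_subtype (fun n : N => x⁻¹ * n * x ∈ N)
    (fun n => f ⟨_, n.2⟩)).trans (Fintype.sum_equiv
      { toFun n := ⟨(n.1, ⟨_, n.2⟩), N.mem_stabilizer_doubleCosetAction_iff.2 rfl⟩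
        invFun p := ⟨p.1.1, by rw [N.mem_stabilizer_doubleCosetAction_iff.1 p.2]; exact p.1.2.2⟩
        left_inv _ := rfl
        right_inv p :=
          Subtype.ext (Prod.ext rfl (Subtype.ext (N.mem_stabilizer_doubleCosetAction_iff.1 p.2))) }
      _ _ fun _ => rfl)

theorem sum_indCF_eq_sum_stabilizer (f : N → k) :
    ∑ n : N, indCF k G N f n
      = (Nat.card N : k)⁻¹ * ∑ x : G, ∑ p : stabilizer (N × N) x, f p.1.2 := by
  simp only [indCF, ← Finset.mul_sum]
  rw [Finset.sum_comm]
  simp only [sum_dite_conj_mem_eq_sum_stabilizer]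

theorem exists_innerCF_indCF_resCF_indCF_one_eq_natCast [CharZero k] {V : Type*}
    [AddCommGroup V] [Module k V] [FiniteDimensional k V] (σ : Representation k N V) :
    ∃ a : ℕ, innerCF k G (indCF k G N (resCF k G N (indCF k G N
        fun n => LinearMap.trace k V (σ n)))) (fun _ => 1) = a ∧
      ∀ x : G,
        invariants (σ.comp ((stabilizer (N × N) x).map (MonoidHom.snd N N)).subtype) ≠ ⊥ →
          0 < a := by
  set τ := σ.comp (MonoidHom.snd N N)
  set d : G → ℕ := fun x => finrank k (invariants (τ.comp (stabilizer (N × N) x).subtype))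
  have hmackey : ∑ x, Nat.card (stabilizer (N × N) x) * d x
      = Nat.card N ^ 2 * ∑ ω : orbitRel.Quotient (N × N) G, d ω.out := by
    simpa only [mem_stabilizer_iff, Nat.card_eq_fintype_card, sq, smul_eq_mul,
      Fintype.card_prod] using
      MulAction.sum_card_stabilizer_smul_eq d (finrank_invariants_comp_stabilizer_smul τ)
  refine ⟨∑ ω : orbitRel.Quotient (N × N) G, d ω.out, ?_, fun x hx => ?_⟩
  · have hsum (x : G) : ∑ p : stabilizer (N × N) x, LinearMap.trace k V (σ p.1.2)
        = Nat.card (stabilizer (N × N) x) * d x :=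
      sum_trace_eq_card_mul_finrank_invariants (τ.comp (stabilizer (N × N) x).subtype)
    have hmackey_cast := congrArg (Nat.cast : ℕ → k) hmackey
    push_cast at hmackey_cast
    rw [innerCF_indCF_one]
    simp only [resCF]
    rw [sum_indCF_eq_sum_stabilizer]
    simp only [hsum, hmackey_cast]
    push_cast
    field_simp
  · have hd : d x ≠ 0 := Submodule.finrank_eq_zero.not.2 <| ne_bot_of_le_ne_bot hx
      fun v hv p => hv ⟨p.1.2, Subgroup.mem_map_of_mem _ p.2⟩
    have hpos : 0 < Nat.card N ^ 2 * ∑ ω : orbitRel.Quotient (N × N) G, d ω.out :=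
      hmackey ▸ (Nat.mul_pos Nat.card_pos (Nat.pos_of_ne_zero hd)).trans_le
        (Finset.single_le_sum (f := fun x => Nat.card (stabilizer (N × N) x) * d x)
          (fun _ _ => Nat.zero_le _) (Finset.mem_univ x))
    exact Nat.pos_of_mul_pos_left hpos

end Induction

theorem depth_two_implies_normal_group_general (k : Type) [Field k] [CharZero k]
    (G : Type) [Group G] [Fintype G] (N : Subgroup G)
    (N₀ : ℕ)
    (h : ∀ (α : ↥N → k) (χ : G → k), IsIrrCharG k α → IsIrrCharG k χ →
      ∀ a b : ℕ,
        innerCF k G (indCF k G N (resCF k G N (indCF k G N α))) χ = (a : k) →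
        innerCF k G (indCF k G N α) χ = (b : k) →
        a ≤ N₀ * b) :
    N.Normal := by
  let := N.doubleCosetAction
  by_contra hN
  obtain ⟨n, hn, g, hgn⟩ : ∃ n ∈ N, ∃ g : G, g * n * g⁻¹ ∉ N := by
    by_contra! hconj
    exact hN ⟨hconj⟩
  set K := (stabilizer (N × N) g).map (MonoidHom.snd N N)
  have hfix (m : N) : ofMulAction k N (N ⧸ K) m (MonoidAlgebra.single ((1 : N) : N ⧸ K) 1)
      = MonoidAlgebra.single ((1 : N) : N ⧸ K) 1 ↔ m ∈ K := by
    rw [ofMulAction_single_one_eq_self_iff, stabilizer_quotient]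
  obtain ⟨U, hU, hUN, hUK⟩ := Subrepresentation.exists_isAtom_of_mem_invariants_of_notMem K
    (fun m => (hfix m).2 m.2)
    (fun hv => hgn (N.mem_map_snd_stabilizer_iff.1 ((hfix ⟨n, hn⟩).1 (hv ⟨n, hn⟩))))
  obtain ⟨a, ha, ha_pos⟩ := exists_innerCF_indCF_resCF_indCF_one_eq_natCast N U.toRepresentation
  have hb : innerCF k G (indCF k G N (U.toGFinRep.chr k)) (fun _ => 1) = ((0 : ℕ) : k) := by
    rw [innerCF_indCF_one]
    simp [GFinRep.chr, sum_trace_eq_card_mul_finrank_invariants, hUN]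
  have hle := h _ _ ⟨_, U.isIrred_toGFinRep hU, rfl⟩ (isIrrCharG_one k G) a 0 ha hb
  have hpos := ha_pos g hUK
  omega

theorem depth_two_implies_normal_group (k : Type) [Field k] [IsAlgClosed k] [CharZero k]
    (G : Type) [Group G] [Fintype G] (N : Subgroup G)
    (N₀ : ℕ) (hN₀ : 0 < N₀)
    (h : ∀ (α : ↥N → k) (χ : G → k), IsIrrCharG k α → IsIrrCharG k χ →
      ∀ a b : ℕ,
        innerCF k G (indCF k G N (resCF k G N (indCF k G N α))) χ = (a : k) →
        innerCF k G (indCF k G N α) χ = (b : k) →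
        a ≤ N₀ * b) :
    N.Normal :=
  depth_two_implies_normal_group_general k G N N₀ h
end
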